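/- Let F̂ : ℝ → [0,1] be a continuous nondecreasing function (a plug-in conditional CDF) and let S be a real random variable with CDF F. Define the transformed variable Ŝ = F̂(S). Then the Kolmogorov–Smirnov distance between the CDF of Ŝ and the CDF of Unif(0,1) is at most d_KS(F, F̂) = sup_t |F(t) − F̂(t)|. -/

import Mathlib

open MeasureTheory

/-- Plug-in PIT bound: if `F̂` is a continuous nondecreasing plug-in CDF with values in
`[0,1]` and `S` has true CDF `F`, then the Kolmogorov–Smirnov distance between the CDF of
`Ŝ = F̂(S)` and the CDF `U(t) = min (max t 0) 1` of `Unif(0,1)` is at most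
`d_KS(F, F̂) = sup_t |F t − F̂ t|`. -/
theorem plugin_pit_ks_bound
    {Ω : Type*} [MeasurableSpace Ω] (μ : Measure Ω) [IsProbabilityMeasure μ]
    (S : Ω → ℝ) (hS : Measurable S)
    (F : ℝ → ℝ) (hF : ∀ t, F t = (μ {ω | S ω ≤ t}).toReal)
    (Fhat : ℝ → ℝ) (hFhatCont : Continuous Fhat) (hFhatMono : Monotone Fhat)
    (hFhat0 : ∀ t, 0 ≤ Fhat t) (hFhat1 : ∀ t, Fhat t ≤ 1)
    (G : ℝ → ℝ) (hG : ∀ t, G t = (μ {ω | Fhat (S ω) ≤ t}).toReal)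
    (U : ℝ → ℝ) (hU : ∀ t, U t = min (max t 0) 1) :
    (⨆ t : ℝ, |G t - U t|) ≤ ⨆ t : ℝ, |F t - Fhat t| := by
  set ε := ⨆ t : ℝ, |F t - Fhat t| with hε
  -- basic bounds on F
  have hF0 : ∀ t, 0 ≤ F t := fun t => by rw [hF]; exact ENNReal.toReal_nonneg
  have hF1 : ∀ t, F t ≤ 1 := fun t => by
    rw [hF]
    calc (μ {ω | S ω ≤ t}).toReal ≤ (1 : ENNReal).toReal :=
          ENNReal.toReal_mono ENNReal.one_ne_top prob_le_one
      _ = 1 := by simp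
  have hbdd : BddAbove (Set.range fun t : ℝ => |F t - Fhat t|) := by
    refine ⟨1, ?_⟩
    rintro x ⟨t, rfl⟩
    rw [abs_sub_le_iff]
    constructor <;> [nlinarith [hF0 t, hF1 t, hFhat0 t, hFhat1 t];
      nlinarith [hF0 t, hF1 t, hFhat0 t, hFhat1 t]]
  have hεle : ∀ t, |F t - Fhat t| ≤ ε := fun t => le_ciSup hbdd t
  have hε0 : 0 ≤ ε := le_trans (abs_nonneg _) (hεle 0)
  -- F is the cdf of the pushforward measure
  set ν := μ.map S with hν
  haveI : IsProbabilityMeasure ν := Measure.isProbabilityMeasure_map hS.aemeasurable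
  have hFcdf : F = fun x => ProbabilityTheory.cdf ν x := by
    funext x
    rw [hF, ProbabilityTheory.cdf_eq_real, measureReal_def, hν, Measure.map_apply hS measurableSet_Iic]
    rfl
  have htop : Filter.Tendsto F Filter.atTop (nhds 1) := by
    rw [hFcdf]; exact ProbabilityTheory.tendsto_cdf_atTop ν
  have hbot : Filter.Tendsto F Filter.atBot (nhds 0) := by
    rw [hFcdf]; exact ProbabilityTheory.tendsto_cdf_atBot ν
  refine ciSup_le fun t => ?_
  rcases lt_or_ge t 0 with ht0 | ht0
  · -- t < 0 : both G and U are 0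
    have hset : {ω | Fhat (S ω) ≤ t} = (∅ : Set Ω) := by
      ext ω; simp only [Set.mem_setOf_eq, Set.mem_empty_iff_false, iff_false, not_le]
      exact lt_of_lt_of_le ht0 (hFhat0 _)
    have hGt : G t = 0 := by rw [hG, hset]; simp
    have hUt : U t = 0 := by rw [hU, max_eq_right ht0.le]; simp
    rw [hGt, hUt]; simpa using hε0
  rcases le_or_gt 1 t with ht1 | ht1
  · -- t ≥ 1 : both G and U are 1
    have hset : {ω | Fhat (S ω) ≤ t} = (Set.univ : Set Ω) := by
      ext ω; simp only [Set.mem_setOf_eq, Set.mem_univ, iff_true]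
      exact le_trans (hFhat1 _) ht1
    have hGt : G t = 1 := by rw [hG, hset]; simp
    have hUt : U t = 1 := by
      rw [hU, max_eq_left (le_trans zero_le_one ht1), min_eq_right ht1]
    rw [hGt, hUt]; simpa using hε0
  -- 0 ≤ t < 1
  have hUt : U t = t := by
    rw [hU, max_eq_left ht0, min_eq_left ht1.le]
  by_cases hA : ∀ x, t < Fhat x
  · -- the set is empty
    have hset : {ω | Fhat (S ω) ≤ t} = (∅ : Set Ω) := by
      ext ω; simp only [Set.mem_setOf_eq, Set.mem_empty_iff_false, iff_false, not_le]
      exact hA _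
    have hGt : G t = 0 := by rw [hG, hset]; simp
    have key : ∀ x, t - F x ≤ ε := fun x => by
      have h1 : Fhat x - F x ≤ |F x - Fhat x| := by
        rw [abs_sub_comm]; exact le_abs_self _
      have := hεle x
      linarith [(hA x).le]
    have hlim : Filter.Tendsto (fun x => t - F x) Filter.atBot (nhds t) := by
      have := (hbot.const_sub t)
      simpa using this
    have : t ≤ ε := le_of_tendsto' hlim key
    rw [hGt, hUt]
    rw [abs_sub_comm, abs_of_nonneg (by linarith : (0:ℝ) ≤ t - 0)]
    simpa using this
  push_neg at hA
  obtain ⟨y, hy⟩ := hA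
  by_cases hB : ∀ x, Fhat x ≤ t
  · -- the set is everything
    have hset : {ω | Fhat (S ω) ≤ t} = (Set.univ : Set Ω) := by
      ext ω; simp only [Set.mem_setOf_eq, Set.mem_univ, iff_true]; exact hB _
    have hGt : G t = 1 := by rw [hG, hset]; simp
    have key : ∀ x, F x - t ≤ ε := fun x => by
      have h1 : F x - Fhat x ≤ |F x - Fhat x| := le_abs_self _
      have := hεle x
      linarith [hB x]
    have hlim : Filter.Tendsto (fun x => F x - t) Filter.atTop (nhds (1 - t)) := by
      simpa using htop.sub_const t
    have : 1 - t ≤ ε := le_of_tendsto' hlim key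
    rw [hGt, hUt, abs_of_nonneg (by linarith : (0:ℝ) ≤ 1 - t)]
    exact this
  push_neg at hB
  obtain ⟨z, hz⟩ := hB
  -- proper case : the set {x | Fhat x ≤ t} = Iic a with Fhat a = t
  set A := {x : ℝ | Fhat x ≤ t} with hAdef
  have hAne : A.Nonempty := ⟨y, hy⟩
  have hAbdd : BddAbove A := by
    refine ⟨z, fun x hx => ?_⟩
    by_contra h
    push_neg at h
    exact absurd (le_trans (hFhatMono h.le) hx) (not_le.mpr hz)
  have hAclosed : IsClosed A := isClosed_Iic.preimage hFhatCont
  set a := sSup A with ha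
  have haA : a ∈ A := hAclosed.csSup_mem hAne hAbdd
  have hFhata : Fhat a = t := by
    refine le_antisymm haA ?_
    by_contra h
    push_neg at h
    have hev : ∀ᶠ x in nhds a, Fhat x < t :=
      (hFhatCont.continuousAt).eventually_lt_const h
    have hev' : ∀ᶠ x in nhdsWithin a (Set.Ioi a), Fhat x < t :=
      hev.filter_mono nhdsWithin_le_nhds
    obtain ⟨x, hx1, hx2⟩ := (hev'.and eventually_mem_nhdsWithin).exists
    have hxA : x ∈ A := hx1.le
    have : x ≤ a := le_csSup hAbdd hxA
    exact absurd this (not_le.mpr hx2)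
  have hset : {ω | Fhat (S ω) ≤ t} = {ω | S ω ≤ a} := by
    ext ω
    simp only [Set.mem_setOf_eq]
    constructor
    · intro h
      exact le_csSup hAbdd h
    · intro h
      calc Fhat (S ω) ≤ Fhat a := hFhatMono h
        _ = t := hFhata
  have hGt : G t = F a := by rw [hG, hset, hF]
  rw [hGt, hUt, ← hFhata]
  exact hεle a
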